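/- arXiv:2510.20564 — 8 statements merged into one kernel-verified Lean document; each statement's English description precedes it below -/
import Mathlib

section
/- Let U, V be Hilbert spaces, b : U × V → ℂ a bounded sesquilinear form, U^δ ⊆ U and V^δ ⊆ V finite-dimensional subspaces, and suppose the discrete inf-sup constant γ := inf_{0≠u∈U^δ} sup_{0≠v∈V^δ} |b(u,v)|/(‖u‖_U ‖v‖_V) is positive. Then for every u ∈ U the Petrov–Galerkin/minimal-residual approximation u^δ := argmin_{w∈U^δ} sup_{0≠v∈V^δ} |b(u−w, v)|/‖v‖_V (assuming b satisfies |b(w,v)| ≤ ‖w‖_U‖v‖_V for all w,v) exists, is unique, and satisfies ‖u − u^δ‖_U ≤ (1/γ) inf_{w∈U^δ} ‖u − w‖_U. -/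
/-!
Let `T : U → Vδ` send `x` to the Riesz representative of `b x` restricted to `Vδ`. Then the
residual of `x` is `‖T x‖`, the continuity bound reads `‖T x‖ ≤ ‖x‖`, and the inf-sup condition
reads `γ ‖w‖ ≤ ‖T w‖` on `Uδ`. Minimising `‖T (u - w)‖` over `w ∈ Uδ` is the orthogonal projection
of `T u` onto `T Uδ`: a minimiser exists, is characterised by `T (u - uδ) ⟂ T Uδ`, and is unique
because `T` is injective on `Uδ`.

For the sharp constant `1 / γ` (rather than `1 + 1 / γ`), orthogonality and the two bounds on `T`
give `γ ‖z‖ ≤ ‖e + z‖` for `e = u - uδ` and every `z ∈ Uδ`. Applied to all multiples of a fixed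
`z`, this is a nonnegative real quadratic, and its discriminant yields the strengthened
Cauchy–Schwarz inequality `|⟪e, z⟫|² ≤ (1 - γ²) ‖e‖² ‖z‖²`, which in turn gives
`γ ‖e‖ ≤ ‖e + z‖`. Taking `z = uδ - w` bounds `γ ‖u - uδ‖` by `‖u - w‖`.
-/

open RCLike
open scoped InnerProductSpace

theorem Real.iSup_div_of_nonneg {ι : Sort*} {a : ℝ} (ha : 0 ≤ a) (f : ι → ℝ) :
    (⨆ i, f i) / a = ⨆ i, f i / a := by
  simp only [div_eq_mul_inv, Real.iSup_mul_of_nonneg (inv_nonneg.2 ha)]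

theorem ContinuousLinearMap.norm_eq_iSup_norm_apply_div_norm {𝕜 E F : Type*}
    [NontriviallyNormedField 𝕜] [NormedAddCommGroup E] [NormedSpace 𝕜 E]
    [SeminormedAddCommGroup F] [NormedSpace 𝕜 F] (f : E →L[𝕜] F) :
    ‖f‖ = ⨆ v : {v : E // v ≠ 0}, ‖f v‖ / ‖(v : E)‖ := by
  have hle (v : {v : E // v ≠ 0}) : ‖f v‖ / ‖(v : E)‖ ≤ ‖f‖ :=
    div_le_of_le_mul₀ (norm_nonneg _) (norm_nonneg _) (f.le_opNorm v)
  refine le_antisymm (f.opNorm_le_bound (Real.iSup_nonneg fun v ↦ by positivity) fun x ↦ ?_)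
    (Real.iSup_le hle (norm_nonneg f))
  rcases eq_or_ne x 0 with rfl | hx
  · simp
  · rw [← div_le_iff₀ (norm_pos_iff.2 hx)]
    exact le_ciSup ⟨‖f‖, Set.forall_mem_range.2 hle⟩ (⟨x, hx⟩ : {v : E // v ≠ 0})

section NormedAddCommGroup

variable {E : Type*} [NormedAddCommGroup E] {g : E → ℝ}

theorem iInf_div_norm_mul_norm_le (hg : ∀ x, 0 ≤ g x) (x : E) :
    (⨅ y : {y : E // y ≠ 0}, g y / ‖(y : E)‖) * ‖x‖ ≤ g x := by
  rcases eq_or_ne x 0 with rfl | hx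
  · simpa using hg 0
  · rw [← le_div_iff₀ (norm_pos_iff.2 hx)]
    exact ciInf_le ⟨0, by rintro _ ⟨y, rfl⟩; exact div_nonneg (hg y) (norm_nonneg _)⟩
      (⟨x, hx⟩ : {y : E // y ≠ 0})

theorem iInf_div_norm_le_one (hg0 : ∀ x, 0 ≤ g x) (hg : ∀ x, g x ≤ ‖x‖) :
    ⨅ y : {y : E // y ≠ 0}, g y / ‖(y : E)‖ ≤ 1 := by
  cases isEmpty_or_nonempty {y : E // y ≠ 0} with
  | inl h => simp [Real.iInf_of_isEmpty]
  | inr h =>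
    obtain ⟨y, hy⟩ := h
    refine ciInf_le_of_le ⟨0, ?_⟩ ⟨y, hy⟩ ((div_le_one (norm_pos_iff.2 hy)).2 (hg y))
    rintro _ ⟨y, rfl⟩
    exact div_nonneg (hg0 y) (norm_nonneg _)

end NormedAddCommGroup

section InnerProductSpace

variable {𝕜 E : Type*} [RCLike 𝕜] [NormedAddCommGroup E] [InnerProductSpace 𝕜 E]

theorem Submodule.forall_norm_sub_le_iff_inner_eq_zero (K : Submodule 𝕜 E) {u v : E}
    (hv : v ∈ K) : (∀ w ∈ K, ‖u - v‖ ≤ ‖u - w‖) ↔ ∀ w ∈ K, ⟪u - v, w⟫_𝕜 = 0 := by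
  have hbdd : BddBelow (Set.range fun w : K ↦ ‖u - w‖) := ⟨0, by rintro _ ⟨w, rfl⟩; positivity⟩
  rw [← K.norm_eq_iInf_iff_inner_eq_zero hv]
  refine ⟨fun h ↦ le_antisymm (le_ciInf fun w ↦ h w w.2) (ciInf_le hbdd ⟨v, hv⟩), ?_⟩
  intro h w hw
  exact h ▸ ciInf_le hbdd ⟨w, hw⟩

theorem norm_le_norm_add_of_inner_eq_zero {x y : E} (h : ⟪x, y⟫_𝕜 = 0) : ‖y‖ ≤ ‖x + y‖ :=
  nonneg_le_nonneg_of_sq_le_sq (norm_nonneg _) <| by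
    rw [norm_add_sq_eq_norm_sq_add_norm_sq_of_inner_eq_zero x y h]
    exact le_add_of_nonneg_left (mul_self_nonneg _)

theorem norm_inner_sq_le_of_forall_mul_norm_smul_le {γ : ℝ} (hγ0 : 0 ≤ γ)
    {e d : E} (h : ∀ c : 𝕜, γ * ‖c • d‖ ≤ ‖e + c • d‖) :
    ‖⟪e, d⟫_𝕜‖ ^ 2 ≤ (1 - γ ^ 2) * ‖e‖ ^ 2 * ‖d‖ ^ 2 := by
  obtain ⟨z, hz, hzp⟩ := exists_norm_eq_mul_self ⟪e, d⟫_𝕜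
  have hquad (t : ℝ) :
      0 ≤ (1 - γ ^ 2) * ‖d‖ ^ 2 * (t * t) + (-2 * ‖⟪e, d⟫_𝕜‖) * t + ‖e‖ ^ 2 := by
    have hsq := pow_le_pow_left₀ (by positivity) (h ((-t : ℝ) * z)) 2
    rw [norm_add_sq (𝕜 := 𝕜), inner_smul_right, mul_assoc, ← hzp, ← ofReal_mul, ofReal_re,
      norm_smul, norm_mul, hz, norm_ofReal, abs_neg, mul_one, mul_pow, mul_pow, sq_abs] at hsq
    nlinarith
  have hdiscr := discrim_le_zero hquad
  unfold discrim at hdiscr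
  nlinarith

theorem mul_norm_le_norm_add_of_forall_mul_norm_smul_le {γ : ℝ} (hγ0 : 0 ≤ γ) (hγ1 : γ ≤ 1)
    {e d : E} (h : ∀ c : 𝕜, γ * ‖c • d‖ ≤ ‖e + c • d‖) : γ * ‖e‖ ≤ ‖e + d‖ := by
  have hp := norm_inner_sq_le_of_forall_mul_norm_smul_le hγ0 h
  have hre : -‖⟪e, d⟫_𝕜‖ ≤ re ⟪e, d⟫_𝕜 := neg_le_of_abs_le (abs_re_le_norm _)
  have hσ : 0 ≤ 1 - γ ^ 2 := by nlinarith
  -- `(1 - γ²) ‖e‖² + ‖d‖² ≥ 2 √(1 - γ²) ‖e‖ ‖d‖ ≥ 2 ‖⟪e, d⟫‖` (AM-GM)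
  have hamgm : 2 * ‖⟪e, d⟫_𝕜‖ ≤ (1 - γ ^ 2) * ‖e‖ ^ 2 + ‖d‖ ^ 2 := by
    refine le_of_abs_le (abs_le_of_sq_le_sq ?_ (by positivity))
    nlinarith [sq_nonneg ((1 - γ ^ 2) * ‖e‖ ^ 2 - ‖d‖ ^ 2)]
  refine le_of_abs_le (abs_le_of_sq_le_sq ?_ (norm_nonneg _))
  rw [norm_add_sq (𝕜 := 𝕜)]
  nlinarith

end InnerProductSpace

section MinResidual

variable {𝕜 U W : Type*} [RCLike 𝕜] [NormedAddCommGroup U] [InnerProductSpace 𝕜 U]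
  [NormedAddCommGroup W] [InnerProductSpace 𝕜 W]
  (T : U →ₗ[𝕜] W) (K : Submodule 𝕜 U) (u : U)

def IsMinResidual (y : K) : Prop := ∀ w : K, ‖T (u - y)‖ ≤ ‖T (u - w)‖

variable {T K u}

theorem isMinResidual_iff_inner_eq_zero {y : K} :
    IsMinResidual T K u y ↔ ∀ z ∈ K, ⟪T (u - y), T z⟫_𝕜 = 0 := by
  have key := (K.map T).forall_norm_sub_le_iff_inner_eq_zero (u := T u) ⟨y, y.2, rfl⟩
  simp only [Submodule.mem_map, forall_exists_index, and_imp, forall_apply_eq_imp_iff₂,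
    ← map_sub] at key
  exact Subtype.forall.trans key

variable (T K u) in
theorem exists_isMinResidual [(K.map T).HasOrthogonalProjection] :
    ∃ y, IsMinResidual T K u y := by
  obtain ⟨y, hy, hTy⟩ := ((K.map T).starProjection_apply_mem (T u) : _ ∈ K.map T)
  refine ⟨⟨y, hy⟩, isMinResidual_iff_inner_eq_zero.2 fun z hz ↦ ?_⟩
  rw [map_sub, hTy]
  exact (K.map T).inner_left_of_mem_orthogonal ⟨z, hz, rfl⟩
    ((K.map T).sub_starProjection_mem_orthogonal (T u))

theorem IsMinResidual.unique {γ : ℝ} (hγ : 0 < γ) (hinf : ∀ z ∈ K, γ * ‖z‖ ≤ ‖T z‖)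
    {y y' : K} (hy : IsMinResidual T K u y) (hy' : IsMinResidual T K u y') : y = y' := by
  have hz : (y' : U) - y ∈ K := sub_mem y'.2 y.2
  have hTz : ⟪T (y' - y), T (y' - y)⟫_𝕜 = 0 := by
    nth_rw 1 [← sub_sub_sub_cancel_left (y : U) y' u]
    rw [map_sub, inner_sub_left, isMinResidual_iff_inner_eq_zero.1 hy _ hz,
      isMinResidual_iff_inner_eq_zero.1 hy' _ hz, sub_zero]
  have hγz : γ * ‖(y' : U) - y‖ ≤ 0 := by simpa [inner_self_eq_zero.1 hTz] using hinf _ hz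
  have hz0 := norm_le_zero_iff.1 (nonpos_of_mul_nonpos_right hγz hγ)
  exact (Subtype.ext (sub_eq_zero.1 hz0)).symm

theorem IsMinResidual.mul_norm_sub_le (hT : ∀ x, ‖T x‖ ≤ ‖x‖) {γ : ℝ} (hγ0 : 0 ≤ γ)
    (hγ1 : γ ≤ 1) (hinf : ∀ z ∈ K, γ * ‖z‖ ≤ ‖T z‖) {y : K} (hy : IsMinResidual T K u y)
    (w : K) : γ * ‖u - y‖ ≤ ‖u - w‖ := by
  have hstab (z : U) (hz : z ∈ K) : γ * ‖z‖ ≤ ‖(u - y) + z‖ := calc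
    γ * ‖z‖ ≤ ‖T z‖ := hinf z hz
    _ ≤ ‖T (u - y) + T z‖ :=
      norm_le_norm_add_of_inner_eq_zero (isMinResidual_iff_inner_eq_zero.1 hy z hz)
    _ = ‖T ((u - y) + z)‖ := by rw [map_add]
    _ ≤ ‖(u - y) + z‖ := hT _
  have h := mul_norm_le_norm_add_of_forall_mul_norm_smul_le hγ0 hγ1 (d := (y : U) - w)
    fun c ↦ hstab _ (K.smul_mem c (sub_mem y.2 w.2))
  rwa [sub_add_sub_cancel] at h

theorem IsMinResidual.norm_sub_le_inv_mul_iInf (hT : ∀ x, ‖T x‖ ≤ ‖x‖) {γ : ℝ} (hγ : 0 < γ)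
    (hγ1 : γ ≤ 1) (hinf : ∀ z ∈ K, γ * ‖z‖ ≤ ‖T z‖) {y : K} (hy : IsMinResidual T K u y) :
    ‖u - y‖ ≤ γ⁻¹ * ⨅ w : K, ‖u - w‖ := by
  rw [← div_eq_inv_mul, le_div_iff₀' hγ]
  exact le_ciInf (hy.mul_norm_sub_le hT hγ.le hγ1 hinf)

end MinResidual

section Riesz

variable {𝕜 U W : Type*} [RCLike 𝕜] [NormedAddCommGroup U] [NormedSpace 𝕜 U]
  [NormedAddCommGroup W] [InnerProductSpace 𝕜 W] [CompleteSpace W]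
  (b : U →ₛₗ[starRingEnd 𝕜] W →ₗ[𝕜] 𝕜) (hb : ∀ w v, ‖b w v‖ ≤ ‖w‖ * ‖v‖)

noncomputable def rieszResidual : U →L[𝕜] W :=
  (InnerProductSpace.toDual 𝕜 W).symm.toContinuousLinearEquiv.toContinuousLinearMap.comp
    (b.mkContinuous₂ 1 fun w v ↦ by simpa using hb w v)

theorem norm_rieszResidual_apply (x : U) :
    ‖rieszResidual b hb x‖ = ⨆ v : {v : W // v ≠ 0}, ‖b x v‖ / ‖(v : W)‖ := by
  exact ((InnerProductSpace.toDual 𝕜 W).symm.norm_map _).trans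
    (ContinuousLinearMap.norm_eq_iSup_norm_apply_div_norm _)

theorem norm_rieszResidual_apply_le (x : U) : ‖rieszResidual b hb x‖ ≤ ‖x‖ := by
  rw [norm_rieszResidual_apply]
  exact Real.iSup_le (fun v ↦ div_le_of_le_mul₀ (norm_nonneg _) (norm_nonneg _) (hb x v))
    (norm_nonneg x)

end Riesz

theorem stmt_2_general
    {U V : Type*}
    [NormedAddCommGroup U] [InnerProductSpace ℂ U]
    [NormedAddCommGroup V] [InnerProductSpace ℂ V]
    (b : U →ₛₗ[starRingEnd ℂ] V →ₗ[ℂ] ℂ)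
    (hb : ∀ (w : U) (v : V), ‖b w v‖ ≤ ‖w‖ * ‖v‖)
    (Uδ : Submodule ℂ U) (Vδ : Submodule ℂ V)
    [FiniteDimensional ℂ Vδ]
    (γ : ℝ)
    (hγdef : γ = ⨅ w : {w : Uδ // w ≠ 0}, ⨆ v : {v : Vδ // v ≠ 0},
        ‖b (((w : Uδ) : U)) (((v : Vδ) : V))‖ / (‖((w : Uδ) : U)‖ * ‖((v : Vδ) : V)‖))
    (hγpos : 0 < γ)
    (u : U) :
    ∃! uδ : Uδ,
      (∀ w : Uδ,
        (⨆ v : {v : Vδ // v ≠ 0},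
            ‖b (u - ((uδ : Uδ) : U)) (((v : Vδ) : V))‖ / ‖((v : Vδ) : V)‖)
          ≤ ⨆ v : {v : Vδ // v ≠ 0},
            ‖b (u - ((w : Uδ) : U)) (((v : Vδ) : V))‖ / ‖((v : Vδ) : V)‖) ∧
      ‖u - ((uδ : Uδ) : U)‖ ≤ (1 / γ) * ⨅ w : Uδ, ‖u - ((w : Uδ) : U)‖ := by
  obtain ⟨R, hres, hRle⟩ : ∃ R : U →L[ℂ] Vδ,
      (∀ x, ‖R x‖ = ⨆ v : {v : Vδ // v ≠ 0}, ‖b x v‖ / ‖(v : V)‖) ∧ ∀ x, ‖R x‖ ≤ ‖x‖ :=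
    ⟨rieszResidual (b.compl₂ Vδ.subtype) fun w v ↦ hb w v, norm_rieszResidual_apply _ _,
      norm_rieszResidual_apply_le _ _⟩
  have hγR : γ = ⨅ w : {w : Uδ // w ≠ 0}, ‖R w‖ / ‖(w : U)‖ :=
    hγdef.trans <| iInf_congr fun w ↦ by
      simp only [hres, Real.iSup_div_of_nonneg (norm_nonneg _), div_mul_eq_div_div_swap]
  have hinf : ∀ z ∈ Uδ, γ * ‖z‖ ≤ ‖R z‖ := fun z hz ↦
    hγR ▸ iInf_div_norm_mul_norm_le (fun w : Uδ ↦ norm_nonneg (R w)) ⟨z, hz⟩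
  have hγ1 : γ ≤ 1 := hγR ▸ iInf_div_norm_le_one (fun w : Uδ ↦ norm_nonneg (R w)) fun w ↦ hRle w
  obtain ⟨uδ, huδ⟩ := exists_isMinResidual R.toLinearMap Uδ u
  simp only [← hres]
  refine ⟨uδ, ⟨huδ, ?_⟩, fun y hy ↦ IsMinResidual.unique hγpos hinf hy.1 huδ⟩
  simpa only [one_div] using huδ.norm_sub_le_inv_mul_iInf hRle hγpos hγ1 hinf

/-- For a bounded sesquilinear form `b` with continuity constant 1,
finite-dimensional subspaces `U^δ, V^δ` and positive discrete inf-sup constant `γ`,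
the minimal-residual (Petrov–Galerkin) approximation of any `u ∈ U` exists, is unique,
and satisfies the quasi-optimality bound `‖u − u^δ‖ ≤ (1/γ) inf_{w ∈ U^δ} ‖u − w‖`. -/
theorem stmt_2
    {U V : Type*}
    [NormedAddCommGroup U] [InnerProductSpace ℂ U] [CompleteSpace U]
    [NormedAddCommGroup V] [InnerProductSpace ℂ V] [CompleteSpace V]
    (b : U →ₛₗ[starRingEnd ℂ] V →ₗ[ℂ] ℂ)
    (hb : ∀ (w : U) (v : V), ‖b w v‖ ≤ ‖w‖ * ‖v‖)
    (Uδ : Submodule ℂ U) (Vδ : Submodule ℂ V)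
    [FiniteDimensional ℂ Uδ] [FiniteDimensional ℂ Vδ]
    (γ : ℝ)
    (hγdef : γ = ⨅ w : {w : Uδ // w ≠ 0}, ⨆ v : {v : Vδ // v ≠ 0},
        ‖b (((w : Uδ) : U)) (((v : Vδ) : V))‖ / (‖((w : Uδ) : U)‖ * ‖((v : Vδ) : V)‖))
    (hγpos : 0 < γ)
    (u : U) :
    ∃! uδ : Uδ,
      (∀ w : Uδ,
        (⨆ v : {v : Vδ // v ≠ 0},
            ‖b (u - ((uδ : Uδ) : U)) (((v : Vδ) : V))‖ / ‖((v : Vδ) : V)‖)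
          ≤ ⨆ v : {v : Vδ // v ≠ 0},
            ‖b (u - ((w : Uδ) : U)) (((v : Vδ) : V))‖ / ‖((v : Vδ) : V)‖) ∧
      ‖u - ((uδ : Uδ) : U)‖ ≤ (1 / γ) * ⨅ w : Uδ, ‖u - ((w : Uδ) : U)‖ :=
  stmt_2_general b hb Uδ Vδ γ hγdef hγpos u
end

section
/- Let u ∈ U be the exact solution and (v^δ, u^δ) the solution of the saddle-point system for the practical least-squares method. Then the Pythagorean identity ‖u − u^δ‖_U² = ‖u − (u^δ + B'v^δ)‖_U² + ‖B'v^δ‖_U² holds; in particular ‖B'v^δ‖_U ≤ ‖u − u^δ‖_U. -/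
/-! If `e - b ⊥ b`, then `e = (e - b) + b` is an orthogonal decomposition, so Pythagoras gives
`‖e‖² = ‖e - b‖² + ‖b‖²`. The first equation of the saddle-point system, tested with
`ṽ = v^δ`, says exactly that `u - (u^δ + B'v^δ) ⊥ B'v^δ`. -/

open scoped InnerProductSpace

section Pythagoras

variable {𝕜 E : Type*} [RCLike 𝕜] [NormedAddCommGroup E] [InnerProductSpace 𝕜 E]

theorem norm_sq_eq_norm_sub_sq_add_norm_sq_of_inner_sub_eq_zero {x y : E}
    (h : ⟪x - y, y⟫_𝕜 = 0) : ‖x‖ ^ 2 = ‖x - y‖ ^ 2 + ‖y‖ ^ 2 := by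
  have := norm_add_sq_eq_norm_sq_add_norm_sq_of_inner_eq_zero (x - y) y h
  rw [sub_add_cancel] at this
  simpa only [sq] using this

theorem norm_le_norm_of_inner_sub_eq_zero {x y : E} (h : ⟪x - y, y⟫_𝕜 = 0) : ‖y‖ ≤ ‖x‖ := by
  have hsq : ‖y‖ ^ 2 ≤ ‖x‖ ^ 2 := by
    rw [norm_sq_eq_norm_sub_sq_add_norm_sq_of_inner_sub_eq_zero h]
    exact le_add_of_nonneg_left (sq_nonneg _)
  exact pow_le_pow_iff_left₀ (norm_nonneg y) (norm_nonneg x) two_ne_zero |>.mp hsq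

end Pythagoras

theorem inner_sub_add_eq_zero_of_inner_add_eq {E : Type*} [NormedAddCommGroup E]
    [InnerProductSpace ℂ E] {u w b : E} (h : ⟪b, b⟫_ℂ + ⟪w, b⟫_ℂ = ⟪u, b⟫_ℂ) :
    ⟪u - (w + b), b⟫_ℂ = 0 := by
  rw [inner_sub_left, inner_add_left]
  linear_combination -h

theorem stmt_4_general
    {U V : Type*}
    [NormedAddCommGroup U] [InnerProductSpace ℂ U]
    [AddCommGroup V] [Module ℂ V]
    (B' : V →ₗ[ℂ] U)
    (Uδ : Submodule ℂ U) (Vδ : Submodule ℂ V)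
    (u : U) (vδ : Vδ) (uδ : Uδ)
    (h1 : ∀ v ∈ Vδ,
      (inner ℂ (B' (vδ : V)) (B' v) : ℂ) + (inner ℂ ((uδ : U)) (B' v) : ℂ)
        = (inner ℂ u (B' v) : ℂ)) :
    ‖u - (uδ : U)‖ ^ 2
        = ‖u - ((uδ : U) + B' (vδ : V))‖ ^ 2 + ‖B' (vδ : V)‖ ^ 2 ∧
      ‖B' (vδ : V)‖ ≤ ‖u - (uδ : U)‖ := by
  have horth : ⟪u - (uδ : U) - B' vδ, B' vδ⟫_ℂ = 0 := by
    rw [sub_sub]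
    exact inner_sub_add_eq_zero_of_inner_add_eq (h1 vδ vδ.2)
  refine ⟨?_, norm_le_norm_of_inner_sub_eq_zero horth⟩
  rw [norm_sq_eq_norm_sub_sq_add_norm_sq_of_inner_sub_eq_zero horth, sub_sub]

/-- Pythagorean identity for the practical least-squares method:
`‖u − u^δ‖² = ‖u − (u^δ + B'v^δ)‖² + ‖B'v^δ‖²`, hence `‖B'v^δ‖ ≤ ‖u − u^δ‖`,
where `(v^δ, u^δ)` solves the discrete saddle-point system and `u` is the exact solution
(so that `q(ṽ) = ⟨u, B'ṽ⟩_U`). -/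
theorem stmt_4
    {U V : Type*}
    [NormedAddCommGroup U] [InnerProductSpace ℂ U] [CompleteSpace U]
    [AddCommGroup V] [Module ℂ V]
    (B' : V →ₗ[ℂ] U)
    (Uδ : Submodule ℂ U) (Vδ : Submodule ℂ V)
    [FiniteDimensional ℂ Uδ] [FiniteDimensional ℂ Vδ]
    (u : U) (vδ : Vδ) (uδ : Uδ)
    (h1 : ∀ v ∈ Vδ,
      (inner ℂ (B' (vδ : V)) (B' v) : ℂ) + (inner ℂ ((uδ : U)) (B' v) : ℂ)
        = (inner ℂ u (B' v) : ℂ))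
    (h2 : ∀ w ∈ Uδ, (inner ℂ (B' (vδ : V)) (w : U) : ℂ) = 0) :
    ‖u - (uδ : U)‖ ^ 2
        = ‖u - ((uδ : U) + B' (vδ : V))‖ ^ 2 + ‖B' (vδ : V)‖ ^ 2 ∧
      ‖B' (vδ : V)‖ ≤ ‖u - (uδ : U)‖ :=
  stmt_4_general B' Uδ Vδ u vδ uδ h1
end

section
/- With the boosted approximation u_bst := u^δ + B'v^δ, one has the error bound ‖u − u_bst‖_U ≤ (1/γ) inf{‖u − w‖_U : w ∈ U^δ + (B'(V^δ) ∩ (U^δ)^⊥)}, where γ is the discrete inf-sup constant. -/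
/-!
Let `e := u - u_bst` and `Y := B'(V^δ)`. The discrete equations say `e ⊥ Y` and `B'v^δ ⊥ U^δ`, and
the inf-sup condition says `γ ‖x‖ ≤ ‖P_Y x‖` on `U^δ`. For `a := P_{U^δ} e` this gives
`‖a‖² = ⟪P_{Y^⊥} a, e⟫ ≤ √(1 - γ²) ‖a‖ ‖e‖`, hence `γ ‖e‖ ≤ ‖P_{(U^δ)^⊥} e‖`. For `w` in
`U^δ + (Y ∩ (U^δ)^⊥)`, the projection of `u - w` onto `(U^δ)^⊥` is `P_{(U^δ)^⊥} e` plus an element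
of `Y ∩ (U^δ)^⊥`, which is orthogonal to it; so `‖u - w‖ ≥ ‖P_{(U^δ)^⊥} e‖ ≥ γ ‖e‖`.
-/

open scoped InnerProductSpace

namespace Submodule

variable {𝕜 E : Type*} [RCLike 𝕜] [NormedAddCommGroup E] [InnerProductSpace 𝕜 E]

theorem norm_inner_le_norm_starProjection_mul_norm (Y : Submodule 𝕜 E) [Y.HasOrthogonalProjection]
    (x : E) {y : E} (hy : y ∈ Y) : ‖⟪x, y⟫_𝕜‖ ≤ ‖Y.starProjection x‖ * ‖y‖ := by
  rw [← starProjection_eq_self_iff.2 hy, ← inner_starProjection_left_eq_right,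
    starProjection_eq_self_iff.2 hy]
  exact norm_inner_le_norm _ _

theorem norm_starProjection_sq_le_of_mem_orthogonal (K Y : Submodule 𝕜 E)
    [K.HasOrthogonalProjection] [Y.HasOrthogonalProjection] {e : E} (he : e ∈ Yᗮ) :
    ‖K.starProjection e‖ ^ 2 ≤ ‖Yᗮ.starProjection (K.starProjection e)‖ * ‖e‖ := by
  have hinner : ⟪K.starProjection e, e⟫_𝕜 = ⟪Yᗮ.starProjection (K.starProjection e), e⟫_𝕜 := by
    rw [inner_starProjection_left_eq_right Yᗮ, starProjection_eq_self_iff.2 he]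
  calc ‖K.starProjection e‖ ^ 2 = RCLike.re ⟪K.starProjection e, e⟫_𝕜 :=
        (re_inner_starProjection_eq_normSq K e).symm
    _ ≤ ‖⟪K.starProjection e, e⟫_𝕜‖ := RCLike.re_le_norm _
    _ ≤ ‖Yᗮ.starProjection (K.starProjection e)‖ * ‖e‖ := hinner ▸ norm_inner_le_norm _ _

theorem mul_norm_le_norm_starProjection_orthogonal (K Y : Submodule 𝕜 E)
    [K.HasOrthogonalProjection] [Y.HasOrthogonalProjection] {γ : ℝ} (hγ₀ : 0 ≤ γ) (hγ₁ : γ ≤ 1)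
    (hKY : ∀ x ∈ K, γ * ‖x‖ ≤ ‖Y.starProjection x‖) {e : E} (he : e ∈ Yᗮ) :
    γ * ‖e‖ ≤ ‖Kᗮ.starProjection e‖ := by
  set a := K.starProjection e
  have hsplit_e := K.norm_sq_eq_add_norm_sq_starProjection e
  have hsplit_a := Y.norm_sq_eq_add_norm_sq_starProjection a
  have hinfsup := hKY a (K.starProjection_apply_mem e)
  have hcs := norm_starProjection_sq_le_of_mem_orthogonal K Y he
  have hresidual : ‖Yᗮ.starProjection a‖ ^ 2 ≤ (1 - γ ^ 2) * ‖a‖ ^ 2 := by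
    nlinarith [mul_nonneg hγ₀ (norm_nonneg a)]
  have ha : ‖a‖ ^ 2 ≤ (1 - γ ^ 2) * ‖e‖ ^ 2 := by
    rcases (norm_nonneg a).eq_or_lt with ha0 | hapos
    · rw [← ha0, zero_pow two_ne_zero]
      exact mul_nonneg (by nlinarith) (sq_nonneg _)
    · have : (‖a‖ ^ 2) ^ 2 ≤ (1 - γ ^ 2) * ‖a‖ ^ 2 * ‖e‖ ^ 2 := by
        nlinarith [norm_nonneg (Yᗮ.starProjection a), norm_nonneg e]
      nlinarith [pow_pos hapos 2]
  exact (pow_le_pow_iff_left₀ (by positivity) (norm_nonneg _) two_ne_zero).1 (by nlinarith)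

theorem norm_starProjection_orthogonal_sub_le (K Y : Submodule 𝕜 E) [K.HasOrthogonalProjection]
    {u k d s : E} (hk : k ∈ K) (hd : d ∈ Y ⊓ Kᗮ) (he : u - (k + d) ∈ Yᗮ)
    (hs : s ∈ K ⊔ (Y ⊓ Kᗮ)) :
    ‖Kᗮ.starProjection (u - (k + d))‖ ≤ ‖u - s‖ := by
  obtain ⟨q, hq, p, hp, rfl⟩ := mem_sup.1 hs
  set e := u - (k + d)
  have hdp : d - p ∈ Y ⊓ Kᗮ := sub_mem hd hp
  have hproj : Kᗮ.starProjection (u - (q + p)) = Kᗮ.starProjection e + (d - p) := by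
    rw [show u - (q + p) = e + (k - q) + (d - p) by simp only [e]; abel, map_add, map_add,
      starProjection_orthogonal_apply_eq_zero (sub_mem hk hq), starProjection_eq_self_iff.2 hdp.2,
      add_zero]
  have horth : ⟪Kᗮ.starProjection e, d - p⟫_𝕜 = 0 := by
    rw [inner_starProjection_left_eq_right, starProjection_eq_self_iff.2 hdp.2]
    exact (mem_orthogonal' _ _).1 he _ hdp.1
  have hpyth := norm_add_sq_eq_norm_sq_add_norm_sq_of_inner_eq_zero _ _ horth
  calc ‖Kᗮ.starProjection e‖ ≤ ‖Kᗮ.starProjection e + (d - p)‖ :=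
        (mul_self_le_mul_self_iff (norm_nonneg _) (norm_nonneg _)).2
          (by rw [hpyth]; exact le_add_of_nonneg_right (mul_self_nonneg _))
    _ = ‖Kᗮ.starProjection (u - (q + p))‖ := by rw [hproj]
    _ ≤ ‖u - (q + p)‖ := norm_starProjection_apply_le _ _

end Submodule

noncomputable def infSupConstant {𝕜 E : Type*} [RCLike 𝕜] [NormedAddCommGroup E]
    [InnerProductSpace 𝕜 E] (K : Submodule 𝕜 E) {ι : Type*} (f : ι → E) : ℝ :=
  ⨅ w : {w : K // w ≠ 0}, ⨆ i : {i : ι // f i ≠ 0}, ‖⟪(w : E), f i⟫_𝕜‖ / (‖(w : E)‖ * ‖f i‖)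

section InfSupConstant

variable {𝕜 E ι : Type*} [RCLike 𝕜] [NormedAddCommGroup E] [InnerProductSpace 𝕜 E]
  (K : Submodule 𝕜 E) (f : ι → E)

theorem bddBelow_range_iSup_norm_inner_div :
    BddBelow (Set.range fun w : {w : K // w ≠ 0} ↦
      ⨆ i : {i : ι // f i ≠ 0}, ‖⟪(w : E), f i⟫_𝕜‖ / (‖(w : E)‖ * ‖f i‖)) :=
  ⟨0, by rintro _ ⟨w, rfl⟩; exact Real.iSup_nonneg fun i ↦ by positivity⟩

theorem infSupConstant_le_one : infSupConstant K f ≤ 1 := by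
  cases isEmpty_or_nonempty {w : K // w ≠ 0} with
  | inl _ => simp [infSupConstant, Real.iInf_of_isEmpty]
  | inr hw =>
    obtain ⟨w⟩ := hw
    refine ciInf_le_of_le (bddBelow_range_iSup_norm_inner_div K f) w
      (Real.iSup_le (fun i ↦ div_le_one_of_le₀ (norm_inner_le_norm _ _) (by positivity))
        zero_le_one)

theorem infSupConstant_mul_norm_le {Y : Submodule 𝕜 E} [Y.HasOrthogonalProjection]
    (hf : ∀ i, f i ∈ Y) {x : E} (hx : x ∈ K) :
    infSupConstant K f * ‖x‖ ≤ ‖Y.starProjection x‖ := by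
  rcases eq_or_ne x 0 with rfl | hx0
  · simp
  have hxpos : 0 < ‖x‖ := norm_pos_iff.2 hx0
  rw [← le_div_iff₀ hxpos]
  refine ciInf_le_of_le (bddBelow_range_iSup_norm_inner_div K f)
    ⟨⟨x, hx⟩, by simpa using hx0⟩ (Real.iSup_le (fun i ↦ ?_) (by positivity))
  rw [div_le_div_iff₀ (mul_pos hxpos (norm_pos_iff.2 i.2)) hxpos]
  calc ‖⟪x, f i⟫_𝕜‖ * ‖x‖ ≤ ‖Y.starProjection x‖ * ‖f i‖ * ‖x‖ := by
        gcongr; exact Y.norm_inner_le_norm_starProjection_mul_norm x (hf i)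
    _ = ‖Y.starProjection x‖ * (‖x‖ * ‖f i‖) := by ring

end InfSupConstant

theorem stmt_5_general
    {U V : Type*}
    [NormedAddCommGroup U] [InnerProductSpace ℂ U]
    [AddCommGroup V] [Module ℂ V]
    (B' : V →ₗ[ℂ] U)
    (Uδ : Submodule ℂ U) (Vδ : Submodule ℂ V)
    [FiniteDimensional ℂ Uδ] [FiniteDimensional ℂ Vδ]
    (u : U) (vδ : Vδ) (uδ : Uδ)
    (h1 : ∀ v ∈ Vδ,
      (inner ℂ (B' (vδ : V)) (B' v) : ℂ) + (inner ℂ ((uδ : U)) (B' v) : ℂ)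
        = (inner ℂ u (B' v) : ℂ))
    (h2 : ∀ w ∈ Uδ, (inner ℂ (B' (vδ : V)) (w : U) : ℂ) = 0)
    (γ : ℝ) (hγpos : 0 < γ)
    (hγ : γ = ⨅ w : {w : Uδ // w ≠ 0}, ⨆ v : {v : Vδ // B' ((v : Vδ) : V) ≠ 0},
        ‖(inner ℂ (((w : Uδ) : U)) (B' (((v : Vδ) : V))) : ℂ)‖ /
          (‖((w : Uδ) : U)‖ * ‖B' (((v : Vδ) : V))‖)) :
    ‖u - ((uδ : U) + B' (vδ : V))‖
      ≤ (1 / γ) *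
          ⨅ w : (Uδ ⊔ (Vδ.map B' ⊓ Uδᗮ) : Submodule ℂ U), ‖u - ((w : _) : U)‖ := by
  set Y := Vδ.map B'
  have hγ' : γ = infSupConstant Uδ fun v : Vδ ↦ B' v := hγ
  have he : u - ((uδ : U) + B' vδ) ∈ Yᗮ := by
    rw [Submodule.mem_orthogonal']
    rintro _ ⟨v, hv, rfl⟩
    rw [inner_sub_left, inner_add_left, ← h1 v hv]
    ring
  have hBv : B' vδ ∈ Y ⊓ Uδᗮ :=
    ⟨Submodule.mem_map_of_mem vδ.2, (Submodule.mem_orthogonal' _ _).2 h2⟩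
  have hγY : ∀ x ∈ Uδ, γ * ‖x‖ ≤ ‖Y.starProjection x‖ := fun x hx ↦
    hγ' ▸ infSupConstant_mul_norm_le Uδ _ (fun v ↦ Submodule.mem_map_of_mem v.2) hx
  have hbound : ∀ s : (Uδ ⊔ (Y ⊓ Uδᗮ) : Submodule ℂ U), γ * ‖u - ((uδ : U) + B' vδ)‖ ≤ ‖u - s‖ :=
    fun s ↦ (Uδ.mul_norm_le_norm_starProjection_orthogonal Y hγpos.le
      (hγ' ▸ infSupConstant_le_one _ _) hγY he).trans
      (Uδ.norm_starProjection_orthogonal_sub_le Y uδ.2 hBv he s.2)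
  rw [one_div, inv_mul_eq_div, le_div_iff₀ hγpos, mul_comm]
  exact le_ciInf hbound

/-- Error bound for the boosted approximation `u_bst := u^δ + B'v^δ`:
`‖u − u_bst‖ ≤ (1/γ) inf { ‖u − w‖ : w ∈ U^δ + (B'(V^δ) ∩ (U^δ)^⊥) }`,
where `γ` is the discrete inf-sup constant. -/
theorem stmt_5
    {U V : Type*}
    [NormedAddCommGroup U] [InnerProductSpace ℂ U] [CompleteSpace U]
    [AddCommGroup V] [Module ℂ V]
    (B' : V →ₗ[ℂ] U)
    (Uδ : Submodule ℂ U) (Vδ : Submodule ℂ V)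
    [FiniteDimensional ℂ Uδ] [FiniteDimensional ℂ Vδ]
    (u : U) (vδ : Vδ) (uδ : Uδ)
    (h1 : ∀ v ∈ Vδ,
      (inner ℂ (B' (vδ : V)) (B' v) : ℂ) + (inner ℂ ((uδ : U)) (B' v) : ℂ)
        = (inner ℂ u (B' v) : ℂ))
    (h2 : ∀ w ∈ Uδ, (inner ℂ (B' (vδ : V)) (w : U) : ℂ) = 0)
    (γ : ℝ) (hγpos : 0 < γ)
    (hγ : γ = ⨅ w : {w : Uδ // w ≠ 0}, ⨆ v : {v : Vδ // B' ((v : Vδ) : V) ≠ 0},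
        ‖(inner ℂ (((w : Uδ) : U)) (B' (((v : Vδ) : V))) : ℂ)‖ /
          (‖((w : Uδ) : U)‖ * ‖B' (((v : Vδ) : V))‖)) :
    ‖u - ((uδ : U) + B' (vδ : V))‖
      ≤ (1 / γ) *
          ⨅ w : (Uδ ⊔ (Vδ.map B' ⊓ Uδᗮ) : Submodule ℂ U), ‖u - ((w : _) : U)‖ :=
  stmt_5_general B' Uδ Vδ u vδ uδ h1 h2 γ hγpos hγ
end

section
/- Let M^V be Hermitian positive definite, B a matrix, M^U Hermitian positive definite, and S := B^H (M^V)^{-1} B the Schur complement. If γ denotes the inf-sup constant γ = inf_{z≠0} sup_{v≠0} |v^H B z| / (√(z^H M^U z) · √(v^H M^V v)) and the continuity bound sup_{z≠0} sup_{v≠0} |v^H B z| / (√(z^H M^U z)·√(v^H M^V v)) ≤ 1 holds, then γ² M^U ≤ S ≤ M^U in the Loewner order, and the lower bound is attained: there exists z ≠ 0 with z^H S z = γ² z^H M^U z. -/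
/-!
By Cauchy–Schwarz in the inner product `⟪x, y⟫ = xᴴ M^V y`, the supremum over `v` of
`|vᴴ B z| / ‖v‖_{M^V}` is `‖z‖_S = √(zᴴ S z)`, attained at `v = (M^V)⁻¹ B z`. Hence `γ` is the
infimum of the square root of the generalized Rayleigh quotient `zᴴ S z / zᴴ M^U z`, a continuous
function that is invariant under scaling, so its infimum is a minimum taken on the unit sphere;
this gives `γ² M^U ≤ S` with equality at the minimiser. Testing the continuity bound with
`v = (M^V)⁻¹ B z` gives `zᴴ S z ≤ √(zᴴ M^U z) √(zᴴ S z)`, i.e. `S ≤ M^U`.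
-/

open Matrix
open scoped ComplexOrder

namespace Matrix
variable {m n 𝕜 : Type*} [Fintype m] [Fintype n] [RCLike 𝕜]

lemma PosSemidef.norm_dotProduct_mulVec_le {A : Matrix n n 𝕜} (hA : A.PosSemidef) (x y : n → 𝕜) :
    ‖star x ⬝ᵥ (A *ᵥ y)‖ ≤
      √(RCLike.re (star x ⬝ᵥ (A *ᵥ x))) * √(RCLike.re (star y ⬝ᵥ (A *ᵥ y))) := by
  let := A.toSeminormedAddCommGroup hA
  let := A.toInnerProductSpace hA
  have hinner : ∀ u v : n → 𝕜, star u ⬝ᵥ (A *ᵥ v) = inner 𝕜 u v := fun u v => dotProduct_comm _ _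
  rw [hinner, hinner, hinner, ← norm_eq_sqrt_re_inner, ← norm_eq_sqrt_re_inner]
  exact norm_inner_le_norm x y

lemma star_dotProduct_conjTranspose_mulVec (A : Matrix m n 𝕜) (x : n → 𝕜) (y : m → 𝕜) :
    star x ⬝ᵥ (Aᴴ *ᵥ y) = star (A *ᵥ x) ⬝ᵥ y := by
  rw [dotProduct_mulVec, star_mulVec]

lemma PosSemidef.norm_dotProduct_mulVec_self {A : Matrix n n 𝕜} (hA : A.PosSemidef)
    (x : n → 𝕜) : ‖star x ⬝ᵥ (A *ᵥ x)‖ = RCLike.re (star x ⬝ᵥ (A *ᵥ x)) := by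
  obtain ⟨hre, him⟩ := RCLike.nonneg_iff.mp (hA.dotProduct_mulVec_nonneg x)
  rw [← RCLike.re_add_im (star x ⬝ᵥ (A *ᵥ x)), him]
  simp [hre]

lemma IsHermitian.ofReal_re_dotProduct_mulVec {A : Matrix n n 𝕜} (hA : A.IsHermitian)
    (x : n → 𝕜) : (RCLike.re (star x ⬝ᵥ (A *ᵥ x)) : 𝕜) = star x ⬝ᵥ (A *ᵥ x) := by
  conv_rhs => rw [← RCLike.re_add_im (star x ⬝ᵥ (A *ᵥ x)), hA.im_star_dotProduct_mulVec_self]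
  simp

lemma posSemidef_sub_of_forall_re_le {A C : Matrix n n 𝕜} (hA : A.IsHermitian)
    (hC : C.IsHermitian)
    (h : ∀ x, RCLike.re (star x ⬝ᵥ (A *ᵥ x)) ≤ RCLike.re (star x ⬝ᵥ (C *ᵥ x))) :
    (C - A).PosSemidef := by
  refine PosSemidef.of_dotProduct_mulVec_nonneg (hC.sub hA) fun x => ?_
  rw [sub_mulVec, dotProduct_sub, ← hA.ofReal_re_dotProduct_mulVec,
    ← hC.ofReal_re_dotProduct_mulVec, ← RCLike.ofReal_sub, RCLike.ofReal_nonneg, sub_nonneg]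
  exact h x

lemma re_dotProduct_smul_mulVec_smul (A : Matrix n n 𝕜) (c : ℝ) (x : n → 𝕜) :
    RCLike.re (star (c • x) ⬝ᵥ (A *ᵥ (c • x))) = c ^ 2 * RCLike.re (star x ⬝ᵥ (A *ᵥ x)) := by
  rw [mulVec_smul, star_smul, smul_dotProduct, dotProduct_smul, star_trivial, RCLike.smul_re,
    RCLike.smul_re]
  ring

section Schur

variable [DecidableEq m] {M : Matrix m m 𝕜} (B : Matrix m n 𝕜) (z : n → 𝕜)

lemma dotProduct_mulVec_inv_mulVec (hM : M.PosDef) (v : m → 𝕜) :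
    star v ⬝ᵥ (M *ᵥ (M⁻¹ *ᵥ (B *ᵥ z))) = star v ⬝ᵥ (B *ᵥ z) := by
  rw [mulVec_mulVec, mul_nonsing_inv _ ((isUnit_iff_isUnit_det _).mp hM.isUnit), one_mulVec]

lemma inv_mulVec_dotProduct_eq_schur (hM : M.PosDef) :
    star (M⁻¹ *ᵥ (B *ᵥ z)) ⬝ᵥ (B *ᵥ z) = star z ⬝ᵥ ((Bᴴ * M⁻¹ * B) *ᵥ z) := by
  rw [← mulVec_mulVec, ← mulVec_mulVec, star_dotProduct_conjTranspose_mulVec,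
    ← star_dotProduct_conjTranspose_mulVec, hM.inv.isHermitian.eq]

lemma re_inv_mulVec_dotProduct_eq_schur (hM : M.PosDef) :
    RCLike.re (star (M⁻¹ *ᵥ (B *ᵥ z)) ⬝ᵥ (M *ᵥ (M⁻¹ *ᵥ (B *ᵥ z)))) =
      RCLike.re (star z ⬝ᵥ ((Bᴴ * M⁻¹ * B) *ᵥ z)) := by
  rw [dotProduct_mulVec_inv_mulVec B z hM, inv_mulVec_dotProduct_eq_schur B z hM]

lemma norm_dotProduct_mulVec_le_sqrt_schur (hM : M.PosDef) (v : m → 𝕜) :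
    ‖star v ⬝ᵥ (B *ᵥ z)‖ ≤
      √(RCLike.re (star z ⬝ᵥ ((Bᴴ * M⁻¹ * B) *ᵥ z))) * √(RCLike.re (star v ⬝ᵥ (M *ᵥ v))) := by
  have h := hM.posSemidef.norm_dotProduct_mulVec_le v (M⁻¹ *ᵥ (B *ᵥ z))
  rwa [dotProduct_mulVec_inv_mulVec B z hM, re_inv_mulVec_dotProduct_eq_schur B z hM,
    mul_comm] at h

lemma iSup_norm_dotProduct_mulVec_div_eq_sqrt_schur (hM : M.PosDef) {c : ℝ} (hc : 0 ≤ c) :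
    ⨆ v : {v : m → 𝕜 // v ≠ 0},
        ‖star (v : m → 𝕜) ⬝ᵥ (B *ᵥ z)‖ / (c * √(RCLike.re (star (v : m → 𝕜) ⬝ᵥ (M *ᵥ v)))) =
      √(RCLike.re (star z ⬝ᵥ ((Bᴴ * M⁻¹ * B) *ᵥ z))) / c := by
  set t := RCLike.re (star z ⬝ᵥ ((Bᴴ * M⁻¹ * B) *ᵥ z))
  have hbound : ∀ v : {v : m → 𝕜 // v ≠ 0},
      ‖star (v : m → 𝕜) ⬝ᵥ (B *ᵥ z)‖ / (c * √(RCLike.re (star (v : m → 𝕜) ⬝ᵥ (M *ᵥ v)))) ≤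
        √t / c := by
    rintro ⟨v, hv⟩
    have hq : 0 < √(RCLike.re (star v ⬝ᵥ (M *ᵥ v))) := Real.sqrt_pos.mpr (hM.re_dotProduct_pos hv)
    calc _ ≤ √t * √(RCLike.re (star v ⬝ᵥ (M *ᵥ v))) / (c * √(RCLike.re (star v ⬝ᵥ (M *ᵥ v)))) :=
          div_le_div_of_nonneg_right (norm_dotProduct_mulVec_le_sqrt_schur B z hM v)
            (by positivity)
      _ = √t / c := mul_div_mul_right _ _ hq.ne'
  have hS := hM.inv.posSemidef.conjTranspose_mul_mul_same B
  have ht0 : 0 ≤ t := hS.re_dotProduct_nonneg z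
  refine le_antisymm (Real.iSup_le hbound (by positivity)) ?_
  rcases ht0.eq_or_lt with ht | ht
  · rw [← ht, Real.sqrt_zero, zero_div]
    exact Real.iSup_nonneg fun _ => by positivity
  have hw : M⁻¹ *ᵥ (B *ᵥ z) ≠ 0 := by
    intro hw
    have := re_inv_mulVec_dotProduct_eq_schur B z hM
    rw [hw] at this
    simp only [star_zero, zero_dotProduct, map_zero] at this
    exact ht.ne this
  have hval : ‖star (M⁻¹ *ᵥ (B *ᵥ z)) ⬝ᵥ (B *ᵥ z)‖ /
      (c * √(RCLike.re (star (M⁻¹ *ᵥ (B *ᵥ z)) ⬝ᵥ (M *ᵥ (M⁻¹ *ᵥ (B *ᵥ z)))))) = √t / c := by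
    rw [re_inv_mulVec_dotProduct_eq_schur B z hM, inv_mulVec_dotProduct_eq_schur B z hM,
      hS.norm_dotProduct_mulVec_self]
    change t / (c * √t) = √t / c
    conv_lhs => arg 1; rw [← Real.mul_self_sqrt ht0]
    exact mul_div_mul_right _ _ (Real.sqrt_pos.mpr ht).ne'
  exact hval ▸ le_ciSup ⟨_, Set.forall_mem_range.mpr hbound⟩ ⟨_, hw⟩

lemma re_schur_le_of_norm_dotProduct_mulVec_le (hM : M.PosDef) {u : ℝ} (hu : 0 ≤ u)
    (h : ∀ v : m → 𝕜, ‖star v ⬝ᵥ (B *ᵥ z)‖ ≤ √u * √(RCLike.re (star v ⬝ᵥ (M *ᵥ v)))) :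
    RCLike.re (star z ⬝ᵥ ((Bᴴ * M⁻¹ * B) *ᵥ z)) ≤ u := by
  have hS := hM.inv.posSemidef.conjTranspose_mul_mul_same B
  have ht0 := hS.re_dotProduct_nonneg z
  have hw := h (M⁻¹ *ᵥ (B *ᵥ z))
  rw [re_inv_mulVec_dotProduct_eq_schur B z hM, inv_mulVec_dotProduct_eq_schur B z hM,
    hS.norm_dotProduct_mulVec_self] at hw
  set t := RCLike.re (star z ⬝ᵥ ((Bᴴ * M⁻¹ * B) *ᵥ z))
  -- `t ≤ √u √t ≤ (u + t) / 2`
  nlinarith [Real.sqrt_nonneg u, Real.sqrt_nonneg t, Real.sq_sqrt hu, Real.sq_sqrt ht0,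
    sq_nonneg (√u - √t)]

end Schur
end Matrix

lemma exists_ne_zero_forall_le_of_smul_invariant {E : Type*} [NormedAddCommGroup E]
    [NormedSpace ℝ E] [FiniteDimensional ℝ E] [Nontrivial E] {f : E → ℝ}
    (hf : ContinuousOn f {0}ᶜ) (hsmul : ∀ c : ℝ, 0 < c → ∀ x, f (c • x) = f x) :
    ∃ x₀ ≠ 0, ∀ x ≠ 0, f x₀ ≤ f x := by
  have hsphere : Metric.sphere (0 : E) 1 ⊆ {0}ᶜ := fun x hx h0 => by
    simp [Set.mem_singleton_iff.mp h0] at hx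
  obtain ⟨x₀, hx₀, hmin⟩ := (isCompact_sphere (0 : E) 1).exists_isMinOn
    (NormedSpace.sphere_nonempty.mpr zero_le_one) (hf.mono hsphere)
  refine ⟨x₀, hsphere hx₀, fun x hx => ?_⟩
  have hnorm : 0 < ‖x‖ := norm_pos_iff.mpr hx
  rw [← hsmul ‖x‖⁻¹ (inv_pos.mpr hnorm) x]
  exact hmin (by simp [norm_smul, hnorm.ne'])

namespace Matrix
variable {n 𝕜 : Type*} [Fintype n] [RCLike 𝕜] {S N : Matrix n n 𝕜}

noncomputable def rayleighQuotient (S N : Matrix n n 𝕜) (z : n → 𝕜) : ℝ :=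
  RCLike.re (star z ⬝ᵥ (S *ᵥ z)) / RCLike.re (star z ⬝ᵥ (N *ᵥ z))

lemma rayleighQuotient_smul (S N : Matrix n n 𝕜) {c : ℝ} (hc : c ≠ 0) (z : n → 𝕜) :
    rayleighQuotient S N (c • z) = rayleighQuotient S N z := by
  rw [rayleighQuotient, rayleighQuotient, re_dotProduct_smul_mulVec_smul,
    re_dotProduct_smul_mulVec_smul, mul_div_mul_left _ _ (pow_ne_zero 2 hc)]

lemma rayleighQuotient_nonneg (hS : S.PosSemidef) (hN : N.PosSemidef) (z : n → 𝕜) :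
    0 ≤ rayleighQuotient S N z :=
  div_nonneg (hS.re_dotProduct_nonneg z) (hN.re_dotProduct_nonneg z)

lemma PosDef.exists_forall_rayleighQuotient_le [Nonempty n] (S : Matrix n n 𝕜) (hN : N.PosDef) :
    ∃ z₀ ≠ 0, ∀ z ≠ 0, rayleighQuotient S N z₀ ≤ rayleighQuotient S N z := by
  refine exists_ne_zero_forall_le_of_smul_invariant ?_ fun c hc => rayleighQuotient_smul S N hc.ne'
  refine ContinuousOn.div (by fun_prop) (by fun_prop) fun z hz => ?_
  exact (hN.re_dotProduct_pos hz).ne'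

lemma PosDef.posSemidef_sub_sq_smul_and_exists_eq [Nonempty n] (hN : N.PosDef)
    (hS : S.PosSemidef) {γ : ℝ}
    (hγ : γ = ⨅ z : {z : n → 𝕜 // z ≠ 0}, √(rayleighQuotient S N z)) :
    (S - (γ : 𝕜) ^ 2 • N).PosSemidef ∧
      ∃ z₀ ≠ 0, star z₀ ⬝ᵥ (S *ᵥ z₀) = (γ : 𝕜) ^ 2 * star z₀ ⬝ᵥ (N *ᵥ z₀) := by
  obtain ⟨z₀, hz₀, hmin⟩ := hN.exists_forall_rayleighQuotient_le S
  have : Nonempty {z : n → 𝕜 // z ≠ 0} := ⟨⟨z₀, hz₀⟩⟩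
  have hleast : IsLeast (Set.range fun z : {z : n → 𝕜 // z ≠ 0} => √(rayleighQuotient S N z))
      √(rayleighQuotient S N z₀) :=
    ⟨⟨⟨z₀, hz₀⟩, rfl⟩, Set.forall_mem_range.mpr fun z => Real.sqrt_le_sqrt (hmin z z.2)⟩
  have hγ₀ : γ ^ 2 = rayleighQuotient S N z₀ := by
    rw [hγ, hleast.isGLB.ciInf_eq, Real.sq_sqrt (rayleighQuotient_nonneg hS hN.posSemidef z₀)]
  have hγN : ((γ : 𝕜) ^ 2 • N).IsHermitian := by
    refine (hN.posSemidef.smul ?_).isHermitian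
    rw [← RCLike.ofReal_pow, RCLike.ofReal_nonneg]
    positivity
  refine ⟨posSemidef_sub_of_forall_re_le hγN hS.isHermitian fun z => ?_, z₀, hz₀, ?_⟩
  · rw [smul_mulVec, dotProduct_smul, smul_eq_mul, ← RCLike.ofReal_pow, RCLike.re_ofReal_mul, hγ₀]
    rcases eq_or_ne z 0 with rfl | hz
    · simp
    exact (le_div_iff₀ (hN.re_dotProduct_pos hz)).mp (hmin z hz)
  · rw [← hS.isHermitian.ofReal_re_dotProduct_mulVec, ← hN.isHermitian.ofReal_re_dotProduct_mulVec,
      ← RCLike.ofReal_pow, ← RCLike.ofReal_mul, hγ₀, rayleighQuotient,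
      div_mul_cancel₀ _ (hN.re_dotProduct_pos hz₀).ne']

end Matrix

/-- For Hermitian positive definite `M^V, M^U`, the Schur complement
`S = Bᴴ (M^V)⁻¹ B` satisfies `γ² M^U ≤ S ≤ M^U` in the Loewner order, where `γ` is the
inf-sup constant and the continuity bound holds; the lower bound is attained by some `z ≠ 0`. -/
theorem stmt_6 {m n : ℕ} (hn : 0 < n)
    (MV : Matrix (Fin m) (Fin m) ℂ) (hMV : MV.PosDef)
    (MU : Matrix (Fin n) (Fin n) ℂ) (hMU : MU.PosDef)
    (B : Matrix (Fin m) (Fin n) ℂ)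
    (hcont : ∀ (z : Fin n → ℂ) (v : Fin m → ℂ),
      ‖star v ⬝ᵥ (B *ᵥ z)‖ ≤
        Real.sqrt ((star z ⬝ᵥ (MU *ᵥ z)).re) * Real.sqrt ((star v ⬝ᵥ (MV *ᵥ v)).re))
    (γ : ℝ)
    (hγ : γ = ⨅ z : {z : Fin n → ℂ // z ≠ 0}, ⨆ v : {v : Fin m → ℂ // v ≠ 0},
      ‖star ((v : Fin m → ℂ)) ⬝ᵥ (B *ᵥ ((z : Fin n → ℂ)))‖ /
        (Real.sqrt ((star ((z : Fin n → ℂ)) ⬝ᵥ (MU *ᵥ ((z : Fin n → ℂ)))).re) *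
          Real.sqrt ((star ((v : Fin m → ℂ)) ⬝ᵥ (MV *ᵥ ((v : Fin m → ℂ)))).re))) :
    ((Bᴴ * MV⁻¹ * B - ((γ : ℂ) ^ 2) • MU).PosSemidef ∧
      (MU - Bᴴ * MV⁻¹ * B).PosSemidef) ∧
    ∃ z : Fin n → ℂ, z ≠ 0 ∧
      star z ⬝ᵥ ((Bᴴ * MV⁻¹ * B) *ᵥ z) = ((γ : ℂ) ^ 2) * (star z ⬝ᵥ (MU *ᵥ z)) := by
  have hS : (Bᴴ * MV⁻¹ * B).PosSemidef := hMV.inv.posSemidef.conjTranspose_mul_mul_same B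
  have : Nonempty (Fin n) := ⟨⟨0, hn⟩⟩
  have hγR : γ = ⨅ z : {z : Fin n → ℂ // z ≠ 0}, √(rayleighQuotient (Bᴴ * MV⁻¹ * B) MU z) := by
    rw [hγ]
    refine iInf_congr fun z => ?_
    exact (iSup_norm_dotProduct_mulVec_div_eq_sqrt_schur B z hMV (Real.sqrt_nonneg _)).trans
      (Real.sqrt_div' _ (hMU.posSemidef.re_dotProduct_nonneg z)).symm
  obtain ⟨hlow, hattain⟩ := hMU.posSemidef_sub_sq_smul_and_exists_eq hS hγR
  refine ⟨⟨hlow, posSemidef_sub_of_forall_re_le hS.isHermitian hMU.isHermitian fun z => ?_⟩,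
    hattain⟩
  exact re_schur_le_of_norm_dotProduct_mulVec_le B z hMV
    (hMU.posSemidef.re_dotProduct_nonneg z) (hcont z)
end

section
/- With E := ∏_{i=N}^{0}(I−P_i) (product of complementary orthogonal projections applied in order), the symmetric subspace correction operator satisfies ⟨Q^{-1}M z, z⟩ = ‖z‖² − ‖E z‖² for all z ∈ X; consequently Q^{-1}M is self-adjoint with spectrum contained in [0, 1], and its largest eigenvalue equals 1 whenever some X_i ≠ {0}. -/
/-!
Since `⟪E⋆E z, z⟫ = ‖E z‖²`, the identity for the quadratic form is immediate. Each factor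
`I − P_i` is the orthogonal projection onto `X_iᗮ`, so `‖E‖ ≤ 1`; in the C⋆-algebra of operators
this means `0 ≤ E⋆E ≤ 1`, which confines the spectrum of `1 − E⋆E` to `[0, 1]`.
If `X_i ≠ 0`, then `I − P_i` is a zero divisor (it kills `P_i ≠ 0`), hence not invertible. The
operators on a finite-dimensional space form a Dedekind-finite ring, where a product is invertible
only if every factor is; so neither `E` nor `E⋆E` is invertible, i.e. `1 ∈ σ(1 − E⋆E)`.
-/

open ContinuousLinearMap Set

theorem List.isUnit_of_isUnit_prod {M : Type*} [Monoid M] [IsDedekindFiniteMonoid M] :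
    ∀ {l : List M}, IsUnit l.prod → ∀ a ∈ l, IsUnit a
  | b :: l, h, a, ha => by
    rw [List.prod_cons, IsUnit.mul_iff] at h
    rcases List.mem_cons.mp ha with rfl | ha
    exacts [h.1, isUnit_of_isUnit_prod h.2 a ha]

theorem one_mem_spectrum_one_sub_mul {R A : Type*} [CommRing R] [Ring A] [Algebra R A]
    [IsDedekindFiniteMonoid A] {a : A} (b : A) (ha : ¬IsUnit a) :
    (1 : R) ∈ spectrum R (1 - b * a) := by
  rw [spectrum.mem_iff, map_one, sub_sub_cancel]
  exact fun h ↦ ha (isUnit_of_mul_isUnit_right h)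

theorem spectrum_one_sub_star_mul_self_subset_Icc {A : Type*} [CStarAlgebra A] [PartialOrder A]
    [StarOrderedRing A] {a : A} (ha : ‖a‖ ≤ 1) :
    spectrum ℂ (1 - star a * a) ⊆ Complex.ofReal '' Icc 0 1 := by
  have hsa : IsSelfAdjoint (1 - star a * a) := (IsSelfAdjoint.one A).sub (.star_mul_self a)
  have hle : star a * a ≤ 1 := by
    calc star a * a ≤ algebraMap ℝ A (‖a‖ ^ 2) := CStarAlgebra.star_mul_le_algebraMap_norm_sq
      _ ≤ algebraMap ℝ A 1 := by gcongr; exact pow_le_one₀ (norm_nonneg a) ha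
      _ = 1 := map_one _
  rw [← hsa.spectrumRestricts.algebraMap_image]
  refine image_mono fun x hx ↦ ⟨spectrum_nonneg_of_nonneg (sub_nonneg.mpr hle) hx, ?_⟩
  have hle_one : 1 - star a * a ≤ algebraMap ℝ A 1 := by
    simp [star_mul_self_nonneg a]
  exact (le_algebraMap_iff_spectrum_le hsa).mp hle_one x hx

instance ContinuousLinearMap.isDedekindFiniteMonoid {R M : Type*} [Semiring R]
    [TopologicalSpace M] [AddCommMonoid M] [ContinuousAdd M] [Module R M]
    [IsDedekindFiniteMonoid (Module.End R M)] : IsDedekindFiniteMonoid (M →L[R] M) :=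
  .of_injective toLinearMapRingHom coe_injective

theorem ContinuousLinearMap.norm_list_prod_le_one {𝕜 E : Type*} [NontriviallyNormedField 𝕜]
    [SeminormedAddCommGroup E] [NormedSpace 𝕜 E] :
    ∀ {l : List (E →L[𝕜] E)}, (∀ T ∈ l, ‖T‖ ≤ 1) → ‖l.prod‖ ≤ 1
  | [], _ => norm_id_le
  | T :: l, h => by
    rw [List.prod_cons]
    exact (norm_mul_le T l.prod).trans <| mul_le_one₀ (h T List.mem_cons_self) (norm_nonneg _)
      (norm_list_prod_le_one fun S hS ↦ h S (List.mem_cons_of_mem T hS))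

theorem Submodule.not_isUnit_one_sub_starProjection {𝕜 E : Type*} [RCLike 𝕜]
    [NormedAddCommGroup E] [InnerProductSpace 𝕜 E] {W : Submodule 𝕜 E}
    [W.HasOrthogonalProjection] (hW : W ≠ ⊥) : ¬IsUnit (1 - W.starProjection) := by
  obtain ⟨w, hw, hw0⟩ := W.exists_mem_ne_zero_of_ne_bot hW
  intro hu
  have hP : W.starProjection = 0 :=
    hu.mul_right_eq_zero.mp W.isIdempotentElem_starProjection.one_sub_mul_self
  exact hw0 (by simpa [hP] using (W.starProjection_eq_self_iff.mpr hw).symm)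

theorem ContinuousLinearMap.inner_one_sub_adjoint_mul_self_apply {𝕜 E : Type*} [RCLike 𝕜]
    [NormedAddCommGroup E] [InnerProductSpace 𝕜 E] [CompleteSpace E] (T : E →L[𝕜] E) (z : E) :
    inner 𝕜 ((1 - adjoint T * T) z) z = ((‖z‖ ^ 2 - ‖T z‖ ^ 2 : ℝ) : 𝕜) := by
  rw [sub_apply, one_apply_eq_self, mul_apply_eq_comp, inner_sub_left, adjoint_inner_left,
    inner_self_eq_norm_sq_to_K, inner_self_eq_norm_sq_to_K]
  push_cast
  rfl

/-- With `E = ∏_{i=N}^{0}(I−P_i)` and `Q⁻¹M = I − E*E`, one has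
`⟨Q⁻¹Mz, z⟩ = ‖z‖² − ‖Ez‖²` for all `z`; consequently `Q⁻¹M` is self-adjoint with spectrum
in `[0,1]`, and `1` is an eigenvalue (the largest) whenever some `X_i ≠ {0}`. -/
theorem stmt_9 {X : Type*}
    [NormedAddCommGroup X] [InnerProductSpace ℂ X] [FiniteDimensional ℂ X]
    (N : ℕ) (W : ℕ → Submodule ℂ X)
    (E A : X →L[ℂ] X)
    (hE : E = (((List.range (N + 1)).map
        (fun i => (1 : X →L[ℂ] X) -
          (W i).subtypeL.comp (Submodule.orthogonalProjection (W i)))).reverse).prod)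
    (hA : A = 1 - (ContinuousLinearMap.adjoint E) * E) :
    (∀ z : X, (inner ℂ (A z) z : ℂ) = ((‖z‖ ^ 2 - ‖E z‖ ^ 2 : ℝ) : ℂ)) ∧
      IsSelfAdjoint A ∧
      spectrum ℂ A ⊆ (Complex.ofReal '' Set.Icc 0 1) ∧
      ((∃ i ≤ N, W i ≠ ⊥) → (1 : ℂ) ∈ spectrum ℂ A) := by
  change E = (((List.range (N + 1)).map fun i ↦ 1 - (W i).starProjection).reverse).prod at hE
  have hA' : A = 1 - star E * E := by rw [hA, star_eq_adjoint]
  refine ⟨hA ▸ inner_one_sub_adjoint_mul_self_apply E, hA' ▸ ?_, hA' ▸ ?_, ?_⟩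
  · exact (IsSelfAdjoint.one _).sub (.star_mul_self E)
  · refine spectrum_one_sub_star_mul_self_subset_Icc (hE ▸ norm_list_prod_le_one ?_)
    simp only [List.mem_reverse, List.mem_map, forall_exists_index, and_imp]
    rintro _ i - rfl
    exact (W i).starProjection_orthogonal' ▸ (W i)ᗮ.starProjection_norm_le
  · rintro ⟨i, hi, hWi⟩
    refine hA' ▸ one_mem_spectrum_one_sub_mul _ fun hEu ↦
      Submodule.not_isUnit_one_sub_starProjection hWi (List.isUnit_of_isUnit_prod (hE ▸ hEu) _ ?_)
    simp only [List.mem_reverse, List.mem_map, List.mem_range]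
    exact ⟨i, by omega, rfl⟩
end

section
/- Let X be a finite-dimensional Hilbert space, X_0,…,X_N subspaces with X_0 + ⋯ + X_N = X, P_i the orthogonal projections, and E = ∏_{i=N}^{0}(I−P_i). Then ‖E z‖ < ‖z‖ for every z ≠ 0; consequently the operator I − E*E is positive definite. -/
/-!
Each factor `I - P_i` is the orthogonal projection onto `X_iᗮ`, so it does not increase norms and
preserves the norm of `x` only when it fixes `x`. Consequently, if `‖E z‖ = ‖z‖` then no factor can
have shortened the vector along the way, so every factor fixes `z`, i.e. `z ⟂ X_i` for all `i`;
as the `X_i` span `X`, this forces `z = 0`. Positive definiteness of `I - E*E` is then the identity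
`re ⟪(I - E*E) z, z⟫ = ‖z‖² - ‖E z‖²`.
-/

open Submodule ContinuousLinearMap

namespace ContinuousLinearMap

variable {𝕜 E : Type*} [NormedField 𝕜] [SeminormedAddCommGroup E] [NormedSpace 𝕜 E]

theorem list_prod_apply_eq_self {l : List (E →L[𝕜] E)} {x : E} (h : ∀ T ∈ l, T x = x) :
    l.prod x = x := by
  induction l with
  | nil => simp
  | cons T l ih =>
    simp only [List.forall_mem_cons] at h
    rw [List.prod_cons, mul_apply_eq_comp, ih h.2, h.1]

theorem norm_list_prod_apply_le {l : List (E →L[𝕜] E)}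
    (hle : ∀ T ∈ l, ∀ x, ‖T x‖ ≤ ‖x‖) (x : E) : ‖l.prod x‖ ≤ ‖x‖ := by
  induction l with
  | nil => simp
  | cons T l ih =>
    simp only [List.forall_mem_cons] at hle
    rw [List.prod_cons, mul_apply_eq_comp]
    exact (hle.1 _).trans (ih hle.2)

theorem apply_eq_self_of_norm_list_prod_apply_eq {l : List (E →L[𝕜] E)}
    (hle : ∀ T ∈ l, ∀ x, ‖T x‖ ≤ ‖x‖) (hfix : ∀ T ∈ l, ∀ x, ‖T x‖ = ‖x‖ → T x = x)
    {x : E} (hx : ‖l.prod x‖ = ‖x‖) : ∀ T ∈ l, T x = x := by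
  induction l with
  | nil => simp
  | cons T l ih =>
    simp only [List.forall_mem_cons] at hle hfix ⊢
    rw [List.prod_cons, mul_apply_eq_comp] at hx
    have hnorm : ‖l.prod x‖ = ‖x‖ :=
      le_antisymm (norm_list_prod_apply_le hle.2 x) (hx ▸ hle.1 _)
    have hrest := ih hle.2 hfix.2 hnorm
    rw [list_prod_apply_eq_self hrest] at hx
    exact ⟨hfix.1 x hx, hrest⟩

end ContinuousLinearMap

section Projection

variable {𝕜 E : Type*} [RCLike 𝕜] [NormedAddCommGroup E] [InnerProductSpace 𝕜 E]

theorem Submodule.starProjection_apply_eq_self_of_norm_eq (K : Submodule 𝕜 E)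
    [K.HasOrthogonalProjection] {x : E} (hx : ‖K.starProjection x‖ = ‖x‖) :
    K.starProjection x = x :=
  starProjection_eq_self_iff.mpr ((K.mem_iff_norm_starProjection x).mpr hx)

theorem Submodule.eq_zero_of_mem_orthogonal_of_iSup_eq_top {ι : Type*} {s : Finset ι}
    {W : ι → Submodule 𝕜 E} (hW : ⨆ i ∈ s, W i = ⊤) {z : E} (hz : ∀ i ∈ s, z ∈ (W i)ᗮ) :
    z = 0 := by
  have hz' : z ∈ (⨆ i ∈ s, W i)ᗮ := by
    rw [← iInf_orthogonal, mem_iInf]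
    intro i
    by_cases hi : i ∈ s
    · simpa [hi] using hz i hi
    · simp [hi]
  rwa [hW, top_orthogonal_eq_bot, mem_bot] at hz'

theorem ContinuousLinearMap.re_inner_one_sub_adjoint_mul_self_apply [CompleteSpace E]
    (T : E →L[𝕜] E) (x : E) :
    RCLike.re (inner 𝕜 ((1 - adjoint T * T) x) x) = ‖x‖ ^ 2 - ‖T x‖ ^ 2 := by
  rw [sub_apply, inner_sub_left, map_sub, one_apply_eq_self, inner_self_eq_norm_sq,
    apply_norm_sq_eq_inner_adjoint_left]
  rfl

end Projection

/-- If `X_0 + ⋯ + X_N = X` (finite dimensions), then the ordered product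
`E = ∏_{i=N}^{0}(I−P_i)` of complementary orthogonal projections is a strict contraction off
zero: `‖Ez‖ < ‖z‖` for `z ≠ 0`; consequently `I − E*E` is positive definite. -/
theorem stmt_10 {X : Type*}
    [NormedAddCommGroup X] [InnerProductSpace ℂ X] [FiniteDimensional ℂ X]
    (N : ℕ) (W : ℕ → Submodule ℂ X)
    (hsum : (⨆ i ∈ Finset.range (N + 1), W i) = ⊤)
    (E : X →L[ℂ] X)
    (hE : E = (((List.range (N + 1)).map
        (fun i => (1 : X →L[ℂ] X) -
          (W i).subtypeL.comp (Submodule.orthogonalProjection (W i)))).reverse).prod) :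
    (∀ z : X, z ≠ 0 → ‖E z‖ < ‖z‖) ∧
      (∀ z : X, z ≠ 0 →
        0 < ((inner ℂ (((1 : X →L[ℂ] X) - (ContinuousLinearMap.adjoint E) * E) z) z : ℂ)).re) := by
  set l := ((List.range (N + 1)).map fun i => (W i)ᗮ.starProjection).reverse
  have hEl : E = l.prod := by
    simp only [hE, l, starProjection_orthogonal']
    rfl
  have hle : ∀ T ∈ l, ∀ x, ‖T x‖ ≤ ‖x‖ := by
    simp only [l, List.mem_reverse, List.mem_map]
    rintro _ ⟨i, -, rfl⟩
    exact norm_starProjection_apply_le _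
  have hfix : ∀ T ∈ l, ∀ x, ‖T x‖ = ‖x‖ → T x = x := by
    simp only [l, List.mem_reverse, List.mem_map]
    rintro _ ⟨i, -, rfl⟩ x
    exact starProjection_apply_eq_self_of_norm_eq _
  have hcontract : ∀ z : X, z ≠ 0 → ‖E z‖ < ‖z‖ := by
    intro z hz
    rw [hEl]
    refine (norm_list_prod_apply_le hle z).lt_of_ne fun hnorm => hz ?_
    refine eq_zero_of_mem_orthogonal_of_iSup_eq_top hsum fun i hi => ?_
    rw [← starProjection_eq_self_iff]
    refine apply_eq_self_of_norm_list_prod_apply_eq hle hfix hnorm _ ?_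
    simp only [l, List.mem_reverse, List.mem_map, List.mem_range]
    exact ⟨i, Finset.mem_range.mp hi, rfl⟩
  refine ⟨hcontract, fun z hz => ?_⟩
  rw [← RCLike.re_to_complex, re_inner_one_sub_adjoint_mul_self_apply, sub_pos]
  exact pow_lt_pow_left₀ (hcontract z hz) (norm_nonneg _) two_ne_zero
end

section
/- Let K be the saddle-point matrix [[A, B],[B^H, 0]] with A Hermitian positive definite and B of full column rank, preconditioned by the block-diagonal matrix diag(Q_V, Q_S) with Q_V, Q_S Hermitian positive definite. Assume γ_V Q_V ≤ A ≤ Q_V (i.e. Γ_V = 1) and Q_S = S := B^H A^{-1} B (i.e. γ_S = Γ_S = 1). Then every negative generalized eigenvalue λ of K x = λ diag(Q_V,Q_S) x satisfies γ_V ≤ λ²/(1+λ). -/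
open Matrix
open scoped ComplexOrder

/-!
Put `w = A⁻¹ B u` and `σ = wᴴ A w = uᴴ S u`. The eigen-equations become
`(A - λ Q_V) v = -A w` and `vᴴ A w = λ σ`. Since `λ < 0`, `M = A - λ Q_V` is positive definite,
and `vᴴ M v = -λ σ > 0` gives `σ > 0`. Cauchy–Schwarz for the `A`-form on `(v, w)` gives
`λ² σ ≤ vᴴ A v`; with `vᴴ A v ≤ vᴴ Q_V v` this turns `vᴴ M v = -λ σ` into `-λ (1 - λ) ≤ 1`,
so `λ > -1`. Cauchy–Schwarz for the `M`-form on `(w, v)` gives `(1 + λ) σ ≤ λ² wᴴ Q_V w`, and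
`γ_V wᴴ Q_V w ≤ wᴴ A w = σ` finishes.
-/

namespace Matrix

open RCLike

variable {ι 𝕜 : Type*} [RCLike 𝕜]

theorem PosSemidef.posDef_sub_smul {A Q : Matrix ι ι 𝕜} (hA : A.PosSemidef) (hQ : Q.PosDef)
    {c : ℝ} (hc : c < 0) : (A - (c : 𝕜) • Q).PosDef := by
  have h : ((-c) • Q).PosDef := hQ.smul (neg_pos.mpr hc)
  rw [real_smul_eq_coe_smul (K := 𝕜), ofReal_neg, neg_smul] at h
  rw [sub_eq_add_neg]
  exact PosDef.posSemidef_add hA h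

variable [Fintype ι]

theorem PosSemidef.norm_dotProduct_mulVec_sq_le {M : Matrix ι ι 𝕜} (hM : M.PosSemidef)
    (x y : ι → 𝕜) :
    ‖star x ⬝ᵥ (M *ᵥ y)‖ ^ 2 ≤ re (star x ⬝ᵥ (M *ᵥ x)) * re (star y ⬝ᵥ (M *ᵥ y)) := by
  let _ := M.toSeminormedAddCommGroup hM
  let _ := M.toInnerProductSpace hM
  have h := inner_mul_inner_self_le (𝕜 := 𝕜) x y
  rw [norm_inner_symm y x, ← sq] at h
  rw [dotProduct_comm (star x), dotProduct_comm (star x), dotProduct_comm (star y)]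
  exact h

theorem PosSemidef.re_dotProduct_mulVec_sq_le {M : Matrix ι ι 𝕜} (hM : M.PosSemidef)
    (x y : ι → 𝕜) :
    re (star x ⬝ᵥ (M *ᵥ y)) ^ 2 ≤ re (star x ⬝ᵥ (M *ᵥ x)) * re (star y ⬝ᵥ (M *ᵥ y)) := by
  refine le_trans ?_ (hM.norm_dotProduct_mulVec_sq_le x y)
  simpa only [sq_abs] using pow_le_pow_left₀ (abs_nonneg _) (abs_re_le_norm _) 2

theorem re_dotProduct_sub_smul_mulVec (A Q : Matrix ι ι 𝕜) (c : ℝ) (x : ι → 𝕜) :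
    re (star x ⬝ᵥ ((A - (c : 𝕜) • Q) *ᵥ x)) =
      re (star x ⬝ᵥ (A *ᵥ x)) - c * re (star x ⬝ᵥ (Q *ᵥ x)) := by
  rw [sub_mulVec, smul_mulVec, dotProduct_sub, dotProduct_smul, smul_eq_mul, map_sub,
    re_ofReal_mul]

end Matrix

namespace SaddlePoint

open RCLike

theorem eigenvalue_bounds_of_scalars {a q σ τ γ lam : ℝ} (hlam : lam < 0) (hσ : 0 < σ)
    (hγ : 0 < γ) (hMv : a - lam * q = -(lam * σ)) (haq : a ≤ q)
    (hcsA : (lam * σ) ^ 2 ≤ a * σ) (hcsM : σ ^ 2 ≤ (σ - lam * τ) * -(lam * σ))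
    (hγτ : γ * τ ≤ σ) :
    -1 < lam ∧ γ ≤ lam ^ 2 / (1 + lam) := by
  have ha : lam ^ 2 * σ ≤ a := le_of_mul_le_mul_right (by nlinarith) hσ
  have hq : (1 - lam) * a ≤ -(lam * σ) := by nlinarith
  have hlt : -1 < lam := by
    have : (1 - lam) * lam ^ 2 ≤ -lam := le_of_mul_le_mul_right (by nlinarith) hσ
    nlinarith
  refine ⟨hlt, (le_div_iff₀ (by linarith)).mpr ?_⟩
  have hστ : (1 + lam) * σ ≤ lam ^ 2 * τ := le_of_mul_le_mul_right (by nlinarith) hσ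
  refine le_of_mul_le_mul_right ?_ hσ
  calc γ * (1 + lam) * σ = γ * ((1 + lam) * σ) := by ring
    _ ≤ γ * (lam ^ 2 * τ) := by gcongr
    _ = lam ^ 2 * (γ * τ) := by ring
    _ ≤ lam ^ 2 * σ := by gcongr

theorem eigenvalue_bounds_of_reduced {ι 𝕜 : Type*} [Fintype ι] [RCLike 𝕜]
    {A Q : Matrix ι ι 𝕜} {γ lam : ℝ} (hA : A.PosSemidef) (hQ : Q.PosDef) (hγ : 0 < γ)
    (hlow : (A - (γ : 𝕜) • Q).PosSemidef) (hup : (Q - A).PosSemidef) (hlam : lam < 0)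
    {v w : ι → 𝕜} (hv : v ≠ 0) (hvw : (A - (lam : 𝕜) • Q) *ᵥ v = -(A *ᵥ w))
    (hAvw : star v ⬝ᵥ (A *ᵥ w) = lam * (star w ⬝ᵥ (A *ᵥ w))) :
    -1 < lam ∧ γ ≤ lam ^ 2 / (1 + lam) := by
  set M := A - (lam : 𝕜) • Q with hMdef
  have hM : M.PosDef := hA.posDef_sub_smul hQ hlam
  set σ := re (star w ⬝ᵥ (A *ᵥ w))
  have hAvw_re : re (star v ⬝ᵥ (A *ᵥ w)) = lam * σ := by rw [hAvw, re_ofReal_mul]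
  have hMvv : re (star v ⬝ᵥ (M *ᵥ v)) = -(lam * σ) := by
    rw [hvw, dotProduct_neg, map_neg, hAvw_re]
  have hMwv : re (star w ⬝ᵥ (M *ᵥ v)) = -σ := by
    rw [hvw, dotProduct_neg, map_neg]
  have hσ : 0 < σ := by
    have := hM.re_dotProduct_pos hv
    nlinarith
  refine eigenvalue_bounds_of_scalars (a := re (star v ⬝ᵥ (A *ᵥ v)))
    (q := re (star v ⬝ᵥ (Q *ᵥ v))) (τ := re (star w ⬝ᵥ (Q *ᵥ w))) hlam hσ hγ ?_ ?_ ?_ ?_ ?_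
  · rw [← hMvv, re_dotProduct_sub_smul_mulVec]
  · have := hup.re_dotProduct_nonneg v
    rw [sub_mulVec, dotProduct_sub, map_sub] at this
    linarith
  · simpa only [hAvw_re] using hA.re_dotProduct_mulVec_sq_le v w
  · have := hM.posSemidef.re_dotProduct_mulVec_sq_le w v
    rwa [hMwv, hMvv, neg_sq, hMdef, re_dotProduct_sub_smul_mulVec] at this
  · have := hlow.re_dotProduct_nonneg w
    rw [re_dotProduct_sub_smul_mulVec] at this
    linarith

end SaddlePoint

theorem stmt_13_general {m n : ℕ}
    (A : Matrix (Fin m) (Fin m) ℂ) (hA : A.PosDef)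
    (B : Matrix (Fin m) (Fin n) ℂ) (hB : Function.Injective B.mulVec)
    (QV : Matrix (Fin m) (Fin m) ℂ) (hQV : QV.PosDef)
    (γV : ℝ) (hγV0 : 0 < γV)
    (hlow : (A - (γV : ℂ) • QV).PosSemidef)
    (hup : (QV - A).PosSemidef)
    (lam : ℝ) (hlam : lam < 0)
    (v : Fin m → ℂ) (u : Fin n → ℂ) (hvu : ¬(v = 0 ∧ u = 0))
    (heig1 : A *ᵥ v + B *ᵥ u = (lam : ℂ) • (QV *ᵥ v))
    (heig2 : Bᴴ *ᵥ v = (lam : ℂ) • ((Bᴴ * A⁻¹ * B) *ᵥ u)) :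
    -1 < lam ∧ γV ≤ lam ^ 2 / (1 + lam) := by
  set w := A⁻¹ *ᵥ (B *ᵥ u)
  have hAw : A *ᵥ w = B *ᵥ u := by
    rw [mulVec_mulVec, mul_nonsing_inv _ ((isUnit_iff_isUnit_det A).mp hA.isUnit), one_mulVec]
  have hv : v ≠ 0 := by
    rintro rfl
    refine hvu ⟨rfl, hB ?_⟩
    simpa using heig1
  refine SaddlePoint.eigenvalue_bounds_of_reduced (w := w) hA.posSemidef hQV hγV0 hlow hup hlam
    hv ?_ ?_
  -- `show` trades the `RCLike.ofReal` casts of the lemma for the `Complex.ofReal` ones above.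
  · show (A - (lam : ℂ) • QV) *ᵥ v = -(A *ᵥ w)
    rw [sub_mulVec, smul_mulVec, ← heig1, hAw]
    abel
  · show star v ⬝ᵥ (A *ᵥ w) = lam * (star w ⬝ᵥ (A *ᵥ w))
    have hBv : star v ᵥ* B = star (Bᴴ *ᵥ v) := by
      rw [star_mulVec, conjTranspose_conjTranspose]
    have hSu : (Bᴴ * A⁻¹ * B) *ᵥ u = Bᴴ *ᵥ w := by
      rw [← mulVec_mulVec, ← mulVec_mulVec]
    rw [hAw, dotProduct_mulVec, hBv, heig2, hSu, star_smul, smul_dotProduct, star_mulVec,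
      conjTranspose_conjTranspose, ← dotProduct_mulVec, Complex.star_def, Complex.conj_ofReal,
      smul_eq_mul]

/-- For the saddle-point matrix `[[A, B],[Bᴴ, 0]]` with `A` Hermitian positive
definite and `B` of full column rank, preconditioned by `diag(Q_V, Q_S)` with
`γ_V Q_V ≤ A ≤ Q_V` and `Q_S = S = Bᴴ A⁻¹ B`, every negative generalized eigenvalue `λ`
satisfies `λ > −1` and `γ_V ≤ λ²/(1+λ)`. -/
theorem stmt_13 {m n : ℕ}
    (A : Matrix (Fin m) (Fin m) ℂ) (hA : A.PosDef)
    (B : Matrix (Fin m) (Fin n) ℂ) (hB : Function.Injective B.mulVec)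
    (QV : Matrix (Fin m) (Fin m) ℂ) (hQV : QV.PosDef)
    (γV : ℝ) (hγV0 : 0 < γV) (hγV1 : γV ≤ 1)
    (hlow : (A - (γV : ℂ) • QV).PosSemidef)
    (hup : (QV - A).PosSemidef)
    (lam : ℝ) (hlam : lam < 0)
    (v : Fin m → ℂ) (u : Fin n → ℂ) (hvu : ¬(v = 0 ∧ u = 0))
    (heig1 : A *ᵥ v + B *ᵥ u = (lam : ℂ) • (QV *ᵥ v))
    (heig2 : Bᴴ *ᵥ v = (lam : ℂ) • ((Bᴴ * A⁻¹ * B) *ᵥ u)) :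
    -1 < lam ∧ γV ≤ lam ^ 2 / (1 + lam) :=
  stmt_13_general A hA B hB QV hQV γV hγV0 hlow hup lam hlam v u hvu heig1 heig2
end

section
/- In the static condensation setting, for x_S, y_S ∈ X_S one has ⟨Ξ(0,x_S), Ξ(0,y_S)⟩_X = (𝒮 x_S)(y_S), where 𝒮 := M_{SS} − M_{SK} M_{KK}^{-1} M_{KS}; moreover 𝒮 is Hermitian positive definite (as a form on X_S) if X_K ∩ X_S = {0} and the inner product is positive definite. -/
/-!
The condition on `ξ` says that `x_S - ξ x_S` is orthogonal to `X_K`, so pairing it with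
`y_S - ξ y_S` only sees `y_S`, which gives the Schur complement formula. The form is the Gram form
of `x_S ↦ x_S - ξ x_S`, and that map is injective because `X_K ∩ X_S = {0}`.
-/

open scoped InnerProductSpace

section

variable {𝕜 E : Type*} [RCLike 𝕜] [NormedAddCommGroup E] [InnerProductSpace 𝕜 E]
  {K : Submodule 𝕜 E} {x u y v : E}

theorem sub_mem_orthogonal_of_inner_eq (h : ∀ k ∈ K, ⟪k, u⟫_𝕜 = ⟪k, x⟫_𝕜) : x - u ∈ Kᗮ :=
  (Submodule.mem_orthogonal K _).2 fun k hk => by rw [inner_sub_right, h k hk, sub_self]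

theorem inner_sub_sub_of_sub_mem_orthogonal (hxu : x - u ∈ Kᗮ) (hv : v ∈ K) :
    ⟪x - u, y - v⟫_𝕜 = ⟪x, y⟫_𝕜 - ⟪u, y⟫_𝕜 := by
  rw [inner_sub_right, Submodule.inner_left_of_mem_orthogonal hv hxu, sub_zero, inner_sub_left]

end

theorem Submodule.sub_ne_zero_of_inf_eq_bot {R M : Type*} [Ring R] [AddCommGroup M] [Module R M]
    {K S : Submodule R M} (h : K ⊓ S = ⊥) {x u : M} (hx : x ∈ S) (hu : u ∈ K) (hx0 : x ≠ 0) :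
    x - u ≠ 0 := by
  intro hxu
  have hxK : x ∈ K ⊓ S := ⟨sub_eq_zero.1 hxu ▸ hu, hx⟩
  rw [h] at hxK
  exact hx0 hxK

theorem stmt_16_general {X : Type*}
    [NormedAddCommGroup X] [InnerProductSpace ℂ X]
    (XK XS : Submodule ℂ X)
    (hdisj : XK ⊓ XS = ⊥)
    (ξ : XS → XK)
    (hξ : ∀ xS : XS, ∀ xK : XK,
      (inner ℂ ((xK : X)) ((ξ xS : X)) : ℂ) = (inner ℂ ((xK : X)) ((xS : X)) : ℂ)) :
    (∀ xS yS : XS,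
        (inner ℂ (((xS : X) - (ξ xS : X))) (((yS : X) - (ξ yS : X))) : ℂ)
          = (inner ℂ ((xS : X)) ((yS : X)) : ℂ) - (inner ℂ ((ξ xS : X)) ((yS : X)) : ℂ)) ∧
      (∀ xS yS : XS,
        (starRingEnd ℂ) ((inner ℂ (((xS : X) - (ξ xS : X))) (((yS : X) - (ξ yS : X))) : ℂ))
          = (inner ℂ (((yS : X) - (ξ yS : X))) (((xS : X) - (ξ xS : X))) : ℂ)) ∧
      (∀ xS : XS, xS ≠ 0 →
        0 < ((inner ℂ (((xS : X) - (ξ xS : X))) (((xS : X) - (ξ xS : X))) : ℂ)).re) := by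
  have horth (xS : XS) : (xS : X) - ξ xS ∈ XKᗮ :=
    sub_mem_orthogonal_of_inner_eq fun k hk => hξ xS ⟨k, hk⟩
  refine ⟨fun xS yS => inner_sub_sub_of_sub_mem_orthogonal (horth xS) (ξ yS).2,
    fun _ _ => inner_conj_symm _ _, fun xS hxS => re_inner_self_pos (𝕜 := ℂ).2 ?_⟩
  exact Submodule.sub_ne_zero_of_inf_eq_bot hdisj xS.2 (ξ xS).2 (by exact_mod_cast hxS)

/-- In the static condensation setting, with `ξ = M_{KK}⁻¹ M_{KS}` (so that
`Ξ(0,x_S) = x_S − ξ x_S`), the transformed inner products are given by the Schur complement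
form `𝒮 = M_{SS} − M_{SK} M_{KK}⁻¹ M_{KS}`:
`⟨Ξ(0,x_S), Ξ(0,y_S)⟩ = (𝒮 x_S)(y_S) = ⟨x_S, y_S⟩ − ⟨ξ x_S, y_S⟩`; moreover `𝒮` is
Hermitian, and positive definite since `X_K ∩ X_S = {0}`. -/
theorem stmt_16 {X : Type*}
    [NormedAddCommGroup X] [InnerProductSpace ℂ X]
    (XK XS : Submodule ℂ X)
    (hdisj : XK ⊓ XS = ⊥) (hsum : XK ⊔ XS = ⊤)
    (ξ : XS → XK)
    (hξ : ∀ xS : XS, ∀ xK : XK,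
      (inner ℂ ((xK : X)) ((ξ xS : X)) : ℂ) = (inner ℂ ((xK : X)) ((xS : X)) : ℂ)) :
    (∀ xS yS : XS,
        (inner ℂ (((xS : X) - (ξ xS : X))) (((yS : X) - (ξ yS : X))) : ℂ)
          = (inner ℂ ((xS : X)) ((yS : X)) : ℂ) - (inner ℂ ((ξ xS : X)) ((yS : X)) : ℂ)) ∧
      (∀ xS yS : XS,
        (starRingEnd ℂ) ((inner ℂ (((xS : X) - (ξ xS : X))) (((yS : X) - (ξ yS : X))) : ℂ))
          = (inner ℂ (((yS : X) - (ξ yS : X))) (((xS : X) - (ξ xS : X))) : ℂ)) ∧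
      (∀ xS : XS, xS ≠ 0 →
        0 < ((inner ℂ (((xS : X) - (ξ xS : X))) (((xS : X) - (ξ xS : X))) : ℂ)).re) :=
  stmt_16_general XK XS hdisj ξ hξ
end
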